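/- Let x_{0,j,i} ∈ ℝ^M (i = 1,…,N_j, j = 1,…,Q, each N_j ≥ 1) be a finite training set partitioned into Q classes with labels y_1,…,y_Q ∈ ℝ^Q that are linearly independent, and suppose the class means x̄_{0,1},…,x̄_{0,Q} are linearly independent (so Q ≤ M). Assume the clustering conditions: (i) δ < c_0 · min_j |x̄_{0,j} − x̄| for some c_0 ∈ (0, 1/4), and (ii) there exists θ_* ∈ [π/2, π) such that for every j, the union over j' ≠ j of the closed balls of radius 4δ centered at x̄_{0,j'} is contained in x̄_{0,j} + C_{θ_*}[f_j]. Then there exists a ReLU network with Q+1 layers of widths d_0 = M, d_1 = d_2 = ⋯ = d_Q = Q, d_{Q+1} = Q that interpolates the data, i.e. maps every training point of class j exactly to y_j; in particular such an interpolating architecture exists whose number of weight and bias parameters does not depend on the data set size N = ∑_j N_j. -/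

import Mathlib

open Matrix

/-- Componentwise ReLU. -/
noncomputable def relu {d : ℕ} (v : Fin d → ℝ) : Fin d → ℝ := fun i => max (v i) 0

/-- Euclidean norm on `Fin n → ℝ`. -/
noncomputable def vnorm {n : ℕ} (x : Fin n → ℝ) : ℝ := Real.sqrt (∑ i, x i * x i)

/-- The angle between two vectors: `arccos(⟨x,h⟩/(|x||h|))`. -/
noncomputable def angle' {n : ℕ} (x h : Fin n → ℝ) : ℝ :=
  Real.arccos ((∑ i, x i * h i) / (vnorm x * vnorm h))

/-- Membership in the cone `C_θ[h] = {x : angle(x,h) ≤ θ/2}` (by convention `0 ∈ C_θ[h]`). -/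
def inCone {n : ℕ} (θ : ℝ) (h : Fin n → ℝ) (x : Fin n → ℝ) : Prop :=
  x = 0 ∨ angle' x h ≤ θ / 2

/-- The hidden layers of a ReLU network of constant width `Q` (0-indexed weights). -/
noncomputable def hiddenConst {Q : ℕ} (W : ℕ → Matrix (Fin Q) (Fin Q) ℝ)
    (b : ℕ → Fin Q → ℝ) : ℕ → (Fin Q → ℝ) → (Fin Q → ℝ)
  | 0, x => x
  | ℓ + 1, x => relu ((W ℓ).mulVec (hiddenConst W b ℓ x) + b ℓ)

/-- The mean of the points of class `j`. -/
noncomputable def classMean {M Q : ℕ} {N : Fin Q → ℕ}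
    (x : ∀ j : Fin Q, Fin (N j) → Fin M → ℝ) (j : Fin Q) : Fin M → ℝ :=
  (N j : ℝ)⁻¹ • ∑ i, x j i

/-- The barycenter `x̄ = (1/Q) ∑_j x̄_{0,j}` of the class means. -/
noncomputable def barycenter {M Q : ℕ} {N : Fin Q → ℕ}
    (x : ∀ j : Fin Q, Fin (N j) → Fin M → ℝ) : Fin M → ℝ :=
  (Q : ℝ)⁻¹ • ∑ j, classMean x j

/-- The unit vector `f_j = (x̄ − x̄_{0,j})/|x̄ − x̄_{0,j}|`. -/
noncomputable def unitDir {M Q : ℕ} {N : Fin Q → ℕ}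
    (x : ∀ j : Fin Q, Fin (N j) → Fin M → ℝ) (j : Fin Q) : Fin M → ℝ :=
  (vnorm (barycenter x - classMean x j))⁻¹ • (barycenter x - classMean x j)

/- ### Auxiliary lemmas -/

lemma vnorm_eq_norm {n : ℕ} (x : Fin n → ℝ) :
    vnorm x = ‖(WithLp.equiv 2 (Fin n → ℝ)).symm x‖ := by
  rw [EuclideanSpace.norm_eq]
  unfold vnorm
  congr 1
  refine Finset.sum_congr rfl fun i _ => ?_
  simp [Real.norm_eq_abs, sq, abs_mul_abs_self, WithLp.equiv_symm_apply, PiLp.toLp_apply]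

lemma ip_eq_inner {n : ℕ} (x h : Fin n → ℝ) :
    (∑ i, x i * h i) =
      inner ℝ ((WithLp.equiv 2 (Fin n → ℝ)).symm x) ((WithLp.equiv 2 (Fin n → ℝ)).symm h) := by
  rw [PiLp.inner_apply]
  simp [RCLike.inner_apply, WithLp.equiv_symm_apply, PiLp.toLp_apply]
  exact Finset.sum_congr rfl fun i _ => mul_comm _ _

lemma vnorm_nonneg {n : ℕ} (x : Fin n → ℝ) : 0 ≤ vnorm x := Real.sqrt_nonneg _

lemma vnorm_neg {n : ℕ} (x : Fin n → ℝ) : vnorm (-x) = vnorm x := by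
  rw [vnorm_eq_norm, vnorm_eq_norm,
    show (WithLp.equiv 2 (Fin n → ℝ)).symm (-x) = -(WithLp.equiv 2 (Fin n → ℝ)).symm x from rfl]
  exact norm_neg _

lemma vnorm_smul {n : ℕ} (c : ℝ) (x : Fin n → ℝ) : vnorm (c • x) = |c| * vnorm x := by
  rw [vnorm_eq_norm, vnorm_eq_norm,
    show (WithLp.equiv 2 (Fin n → ℝ)).symm (c • x)
      = c • (WithLp.equiv 2 (Fin n → ℝ)).symm x from rfl]
  rw [norm_smul, Real.norm_eq_abs]

lemma vnorm_eq_zero {n : ℕ} {x : Fin n → ℝ} : vnorm x = 0 ↔ x = 0 := by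
  rw [vnorm_eq_norm, norm_eq_zero]
  exact WithLp.toLp_eq_zero (p := 2)

lemma vnorm_pos {n : ℕ} {x : Fin n → ℝ} (h : x ≠ 0) : 0 < vnorm x :=
  lt_of_le_of_ne (vnorm_nonneg x) (fun h' => h (vnorm_eq_zero.mp h'.symm))

lemma vnorm_add_le {n : ℕ} (x y : Fin n → ℝ) : vnorm (x + y) ≤ vnorm x + vnorm y := by
  rw [vnorm_eq_norm, vnorm_eq_norm, vnorm_eq_norm,
    show (WithLp.equiv 2 (Fin n → ℝ)).symm (x + y)
      = (WithLp.equiv 2 (Fin n → ℝ)).symm x + (WithLp.equiv 2 (Fin n → ℝ)).symm y from rfl]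
  exact norm_add_le _ _

lemma abs_ip_le {n : ℕ} (x y : Fin n → ℝ) : |∑ i, x i * y i| ≤ vnorm x * vnorm y := by
  rw [ip_eq_inner, vnorm_eq_norm, vnorm_eq_norm]
  exact abs_real_inner_le_norm _ _

lemma ip_self {n : ℕ} (x : Fin n → ℝ) : (∑ i, x i * x i) = vnorm x * vnorm x := by
  unfold vnorm
  rw [Real.mul_self_sqrt (Finset.sum_nonneg fun i _ => mul_self_nonneg _)]

lemma cone_ip_pos {n : ℕ} {θs : ℝ} (hθ : θs < Real.pi) {z h : Fin n → ℝ}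
    (hz : z ≠ 0) (hh : h ≠ 0) (hc : inCone θs h z) : 0 < ∑ i, z i * h i := by
  rcases hc with h0 | hang
  · exact absurd h0 hz
  have hd : 0 < vnorm z * vnorm h := mul_pos (vnorm_pos hz) (vnorm_pos hh)
  have hlt : Real.arccos ((∑ i, z i * h i) / (vnorm z * vnorm h)) < Real.pi / 2 :=
    lt_of_le_of_lt hang (by linarith)
  have hq : 0 < (∑ i, z i * h i) / (vnorm z * vnorm h) := Real.arccos_lt_pi_div_two.mp hlt
  exact (div_pos_iff.mp hq).resolve_right (fun ⟨_, h2⟩ => absurd hd (not_lt.mpr h2.le)) |>.1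

lemma ip_sub {n : ℕ} (g z w : Fin n → ℝ) :
    (∑ m, g m * (z - w) m) = (∑ m, g m * z m) - ∑ m, g m * w m := by
  simp [Pi.sub_apply, mul_sub, Finset.sum_sub_distrib]

lemma separation {M Q : ℕ} {N : Fin Q → ℕ} (hQ : 2 ≤ Q) (hN : ∀ j, 1 ≤ N j)
    (x : ∀ j : Fin Q, Fin (N j) → Fin M → ℝ)
    (hmeans : LinearIndependent ℝ (classMean x))
    (δ : ℝ) (hδ : ∀ j i, vnorm (x j i - classMean x j) ≤ δ)
    (c0 : ℝ) (hc0 : 0 < c0)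
    (hsmall : ∀ j, δ < c0 * vnorm (classMean x j - barycenter x))
    (θs : ℝ) (hθs2 : θs < Real.pi)
    (hcone : ∀ j j' : Fin Q, j' ≠ j → ∀ z : Fin M → ℝ,
      vnorm (z - classMean x j') ≤ 4 * δ → inCone θs (unitDir x j) (z - classMean x j)) :
    ∃ (g : Fin Q → Fin M → ℝ) (β : Fin Q → ℝ),
      (∀ j i, 0 < (∑ m, g j m * x j i m) + β j) ∧
      (∀ j j' : Fin Q, j' ≠ j → ∀ i, (∑ m, g j m * x j' i m) + β j ≤ 0) := by
  have hδ0 : 0 ≤ δ := le_trans (vnorm_nonneg _) (hδ ⟨0, by omega⟩ ⟨0, hN _⟩)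
  have key : ∀ j : Fin Q, ∃ (gj : Fin M → ℝ) (βj : ℝ),
      (∀ i, 0 < (∑ m, gj m * x j i m) + βj) ∧
      (∀ j' : Fin Q, j' ≠ j → ∀ i, (∑ m, gj m * x j' i m) + βj ≤ 0) := by
    intro j
    set μ : Fin M → ℝ := classMean x j with hμ
    set bc : Fin M → ℝ := barycenter x with hbc
    have hr : 0 < vnorm (bc - μ) := by
      have h1 := hsmall j
      rw [show μ - bc = -(bc - μ) by abel, vnorm_neg] at h1
      nlinarith [vnorm_nonneg (bc - μ)]
    set f : Fin M → ℝ := unitDir x j with hf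
    have hfnorm : vnorm f = 1 := by
      rw [hf, unitDir, vnorm_smul, abs_of_nonneg (inv_nonneg.mpr (vnorm_nonneg _))]
      field_simp
      exact div_self hr.ne'
    have hfne : f ≠ 0 := by
      intro h0
      rw [h0] at hfnorm
      rw [vnorm_eq_zero.mpr rfl] at hfnorm
      norm_num at hfnorm
    set g : Fin M → ℝ := -f with hg
    have hgnorm : vnorm g = 1 := by rw [hg, vnorm_neg]; exact hfnorm
    have hgg : (∑ m, g m * g m) = 1 := by rw [ip_self, hgnorm]; norm_num
    have claimA : ∀ j' : Fin Q, j' ≠ j → ∀ i,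
        (∑ m, g m * x j' i m) < (∑ m, g m * μ m) - 2 * δ := by
      intro j' hne i
      set z : Fin M → ℝ := x j' i with hz
      set w : Fin M → ℝ := z + (3 * δ) • g with hw
      have h4 : vnorm (w - classMean x j') ≤ 4 * δ := by
        have : w - classMean x j' = (z - classMean x j') + (3 * δ) • g := by
          rw [hw]; abel
        rw [this]
        calc vnorm ((z - classMean x j') + (3 * δ) • g)
            ≤ vnorm (z - classMean x j') + vnorm ((3 * δ) • g) := vnorm_add_le _ _
          _ ≤ δ + |3 * δ| * 1 := by
              rw [vnorm_smul, hgnorm]; exact add_le_add (hδ j' i) le_rfl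
          _ ≤ 4 * δ := by rw [abs_of_nonneg (by linarith)]; linarith
      have hc := hcone j j' hne w h4
      have hipw : (∑ m, g m * (w - μ) m) = (∑ m, g m * (z - μ) m) + 3 * δ := by
        have : w - μ = (z - μ) + (3 * δ) • g := by rw [hw]; abel
        rw [this]
        simp only [Pi.add_apply, Pi.smul_apply, smul_eq_mul, mul_add, Finset.sum_add_distrib]
        congr 1
        calc (∑ m, g m * (3 * δ * g m)) = 3 * δ * ∑ m, g m * g m := by
              rw [Finset.mul_sum]; exact Finset.sum_congr rfl fun m _ => by ring
          _ = 3 * δ := by rw [hgg, mul_one]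
      by_cases hwμ : w - μ = 0
      · have hδpos : 0 < δ := by
          rcases lt_or_eq_of_le hδ0 with h | h
          · exact h
          · exfalso
            have hz0 : z = classMean x j' := by
              have := hδ j' i
              rw [← h] at this
              have := vnorm_eq_zero.mp (le_antisymm this (vnorm_nonneg _))
              rwa [sub_eq_zero] at this
            have hwz : w = z := by rw [hw, ← h]; simp
            have : classMean x j' = classMean x j := by
              rw [← hz0, ← hwz, ← hμ, ← sub_eq_zero]; exact hwμ
            exact hne (hmeans.injective this)
        have h0 : (∑ m, g m * (w - μ) m) = 0 := by rw [hwμ]; simp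
        have := hipw
        rw [h0] at this
        have hzμ : (∑ m, g m * (z - μ) m) = -(3 * δ) := by linarith
        rw [ip_sub] at hzμ
        linarith
      · have hpos := cone_ip_pos hθs2 hwμ hfne hc
        have hneg : (∑ m, g m * (w - μ) m) < 0 := by
          have : (∑ m, g m * (w - μ) m) = -(∑ m, (w - μ) m * f m) := by
            rw [hg, ← Finset.sum_neg_distrib]
            exact Finset.sum_congr rfl fun m _ => by simp [Pi.neg_apply]; ring
          rw [this]
          linarith
        have : (∑ m, g m * (z - μ) m) < -(3 * δ) := by linarith
        rw [ip_sub] at this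
        linarith
    have claimB : ∀ i, (∑ m, g m * μ m) - δ ≤ ∑ m, g m * x j i m := by
      intro i
      have h1 := abs_ip_le g (x j i - μ)
      rw [hgnorm, one_mul] at h1
      have h2 : vnorm (x j i - μ) ≤ δ := hδ j i
      rw [ip_sub] at h1
      have h4 := abs_le.mp (le_trans h1 h2)
      linarith [h4.1]
    have hnt : Nontrivial (Fin Q) := Fin.nontrivial_iff_two_le.mpr hQ
    obtain ⟨j', hj'⟩ := exists_ne j
    classical
    let T : Finset ((j'' : Fin Q) × Fin (N j'')) := Finset.univ.filter (fun p => p.1 ≠ j)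
    have hp0 : (⟨j', ⟨0, hN j'⟩⟩ : (j'' : Fin Q) × Fin (N j'')) ∈ T := by
      simp [T, hj']
    have hTne : T.Nonempty := ⟨_, hp0⟩
    set B := T.sup' hTne (fun p => ∑ m, g m * x p.1 p.2 m) with hBdef
    have hB : B < (∑ m, g m * μ m) - 2 * δ := by
      rw [hBdef, Finset.sup'_lt_iff]
      intro p hp
      exact claimA p.1 (Finset.mem_filter.mp hp).2 p.2
    refine ⟨g, -B, ?_, ?_⟩
    · intro i
      have := claimB i
      linarith
    · intro j'' hne i
      have hmem : (⟨j'', i⟩ : (j'' : Fin Q) × Fin (N j'')) ∈ T := by simp [T, hne]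
      have := Finset.le_sup' (fun p : (j'' : Fin Q) × Fin (N j'') => ∑ m, g m * x p.1 p.2 m) hmem
      simp only at this
      linarith
  choose g β h1 h2 using key
  exact ⟨g, β, h1, h2⟩

lemma hiddenConst_of_one {Q : ℕ} (W : ℕ → Matrix (Fin Q) (Fin Q) ℝ) (b : ℕ → Fin Q → ℝ)
    (hW : ∀ ℓ, 1 ≤ ℓ → W ℓ = 1) (hb : ∀ ℓ, 1 ≤ ℓ → b ℓ = 0)
    (v u : Fin Q → ℝ) (hu : ∀ k, 0 ≤ u k)
    (h1 : hiddenConst W b 1 v = u) :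
    ∀ n, 1 ≤ n → hiddenConst W b n v = u := by
  intro n hn
  induction n with
  | zero => omega
  | succ m ih =>
    rcases Nat.eq_or_lt_of_le hn with h | h
    · obtain rfl : m = 0 := by omega
      exact h1
    · have hm : 1 ≤ m := by omega
      have := ih hm
      show relu ((W m).mulVec (hiddenConst W b m v) + b m) = u
      rw [this, hW m hm, hb m hm, Matrix.one_mulVec, add_zero]
      funext k
      exact max_eq_left (hu k)

/-- under the clustering conditions, there is a ReLU network with `Q+1` layers
of widths `d_0 = M`, `d_1 = ⋯ = d_Q = Q`, `d_{Q+1} = Q` interpolating the data: the first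
layer maps `ℝ^M → ℝ^Q`, it is followed by `Q−1` hidden layers of width `Q` and a final
affine layer; the number of parameters of this architecture does not depend on the number
of data points. -/
theorem interpolation_with_reduced_widths {M Q : ℕ} (N : Fin Q → ℕ)
    (hN : ∀ j, 1 ≤ N j)
    (x : ∀ j : Fin Q, Fin (N j) → Fin M → ℝ) (y : Fin Q → Fin Q → ℝ)
    (hy : LinearIndependent ℝ y)
    (hmeans : LinearIndependent ℝ (classMean x))
    (δ : ℝ) (hδ : ∀ j i, vnorm (x j i - classMean x j) ≤ δ)
    (c0 : ℝ) (hc0 : 0 < c0) (hc0' : c0 < 1 / 4)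
    (hsmall : ∀ j, δ < c0 * vnorm (classMean x j - barycenter x))
    (θs : ℝ) (hθs1 : Real.pi / 2 ≤ θs) (hθs2 : θs < Real.pi)
    (hcone : ∀ j j' : Fin Q, j' ≠ j → ∀ z : Fin M → ℝ,
      vnorm (z - classMean x j') ≤ 4 * δ → inCone θs (unitDir x j) (z - classMean x j)) :
    ∃ (W1 : Matrix (Fin Q) (Fin M) ℝ) (b1 : Fin Q → ℝ)
      (Wmid : ℕ → Matrix (Fin Q) (Fin Q) ℝ) (bmid : ℕ → Fin Q → ℝ)
      (Wlast : Matrix (Fin Q) (Fin Q) ℝ) (blast : Fin Q → ℝ),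
      ∀ j i,
        Wlast.mulVec
            (hiddenConst Wmid bmid (Q - 1) (relu (W1.mulVec (x j i) + b1))) + blast
          = y j := by
  classical
  rcases Nat.lt_or_ge Q 2 with hQ | hQ
  · interval_cases Q
    · exact ⟨0, 0, 0, 0, 0, 0, fun j => j.elim0⟩
    · refine ⟨0, 0, 0, 0, 0, y 0, fun j i => ?_⟩
      show (0 : Matrix (Fin 1) (Fin 1) ℝ).mulVec _ + y 0 = y j
      rw [Matrix.zero_mulVec, zero_add]
      exact congrArg y (Subsingleton.elim 0 j)
  · obtain ⟨g, β, hpos, hneg⟩ :=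
      separation hQ hN x hmeans δ hδ c0 hc0 hsmall θs hθs2 hcone
    set t : ∀ j : Fin Q, Fin (N j) → ℝ := fun j i => (∑ m, g j m * x j i m) + β j with ht
    have hPne : (Finset.univ : Finset ((j : Fin Q) × Fin (N j))).Nonempty :=
      ⟨⟨⟨0, by omega⟩, ⟨0, hN _⟩⟩, Finset.mem_univ _⟩
    set s : ℝ := Finset.univ.inf' hPne (fun p => t p.1 p.2) with hsdef
    have hs : 0 < s := by
      rw [hsdef, Finset.lt_inf'_iff]
      exact fun p _ => hpos p.1 p.2
    set α : ℝ := s⁻¹ with hα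
    have hα0 : 0 < α := inv_pos.mpr hs
    have hαt : ∀ j i, 1 ≤ α * t j i := by
      intro j i
      have h1 : s ≤ t j i := Finset.inf'_le _ (Finset.mem_univ (⟨j, i⟩ : (j : Fin Q) × Fin (N j)))
      calc (1 : ℝ) = α * s := by rw [hα, inv_mul_cancel₀ hs.ne']
        _ ≤ α * t j i := mul_le_mul_of_nonneg_left h1 hα0.le
    set Wmid : ℕ → Matrix (Fin Q) (Fin Q) ℝ :=
      fun ℓ => if ℓ = 0 then (-α) • (1 : Matrix (Fin Q) (Fin Q) ℝ) else 1 with hWmid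
    set bmid : ℕ → Fin Q → ℝ :=
      fun ℓ => if ℓ = 0 then (fun _ => (1 : ℝ)) else 0 with hbmid
    refine ⟨Matrix.of g, β, Wmid, bmid,
      Matrix.of (fun i k => -(y k i)), (fun i => ∑ k, y k i), fun j i => ?_⟩
    have hv : relu ((Matrix.of g).mulVec (x j i) + β) =
        fun k => if k = j then t j i else 0 := by
      funext k
      show max (((Matrix.of g).mulVec (x j i)) k + β k) 0 = _
      have hmv : ((Matrix.of g).mulVec (x j i)) k = ∑ m, g k m * x j i m := by
        simp [Matrix.mulVec, dotProduct]
      rw [hmv]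
      by_cases hk : k = j
      · subst hk
        simp only [if_pos rfl]
        exact max_eq_left (hpos k i).le
      · simp only [if_neg hk]
        exact max_eq_right (hneg k j (fun h => hk h.symm) i)
    set u : Fin Q → ℝ := fun k => if k = j then 0 else 1 with hu
    have h1 : hiddenConst Wmid bmid 1 (relu ((Matrix.of g).mulVec (x j i) + β)) = u := by
      show relu ((Wmid 0).mulVec (relu ((Matrix.of g).mulVec (x j i) + β)) + bmid 0) = u
      rw [hv, hWmid, hbmid]
      simp only [reduceIte]
      rw [Matrix.smul_mulVec, Matrix.one_mulVec]
      funext k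
      show max ((-α) * (if k = j then t j i else 0) + 1) 0 = u k
      by_cases hk : k = j
      · subst hk
        simp only [hu, reduceIte]
        rw [max_eq_right]
        have := hαt k i
        nlinarith
      · simp only [hu, if_neg hk]
        norm_num
    have hmid := hiddenConst_of_one Wmid bmid
      (fun ℓ hℓ => by rw [hWmid]; simp only [if_neg (by omega : ℓ ≠ 0)])
      (fun ℓ hℓ => by rw [hbmid]; simp only [if_neg (by omega : ℓ ≠ 0)])
      _ u (fun k => by by_cases hk : k = j <;> simp [hu, hk]) h1 (Q - 1) (by omega)
    rw [hmid]
    funext i0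
    show (∑ k, (-(y k i0)) * u k) + (∑ k, y k i0) = y j i0
    have hterm : ∀ k : Fin Q, (-(y k i0)) * u k = (if k = j then y k i0 else 0) - y k i0 := by
      intro k
      by_cases hk : k = j <;> simp [hu, hk]
    rw [Finset.sum_congr rfl fun k _ => hterm k, Finset.sum_sub_distrib,
      Finset.sum_ite_eq' Finset.univ j (fun k => y k i0)]
    simp
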